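/- Distance bound between the SOSM and an arbitrary stable matching: if the colleges' preference profile w has maximum rank difference h(w) = k, then for any stable matching μ and any college j, both |μ⁻¹(j) \ μ*⁻¹(j, u)| ≤ 4(k ∨ 1) and |μ*⁻¹(j, u) \ μ⁻¹(j)| ≤ 4(k ∨ 1); consequently, for any j ∈ M ∪ {0}, the number of students i with 1{μ(i) = j} ≠ 1{μ*(i, u) = j} is at most 8(k ∨ 1). -/

import Mathlib

attribute [local instance] Classical.propDecidable

noncomputable section

/-- A many-to-one college admissions market (college admissions model) with `n`
students and `m` colleges.  Strict preferences are encoded by injective rank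
functions (a smaller rank means more preferred); `none` is the outside option
`0` (being unmatched / an unfilled position). -/
structure Market (n m : ℕ) where
  quota : Fin m → ℕ
  sRank : Fin n → Option (Fin m) → ℕ
  sRank_inj : ∀ i, Function.Injective (sRank i)
  cRank : Fin m → Option (Fin n) → ℕ
  cRank_inj : ∀ j, Function.Injective (cRank j)

namespace Market

variable {n m : ℕ}

/-- Student `i` strictly prefers `a` to `b`. -/
def sPref (M : Market n m) (i : Fin n) (a b : Option (Fin m)) : Prop :=
  M.sRank i a < M.sRank i b

/-- College `j` strictly prefers `a` to `b`. -/
def cPref (M : Market n m) (j : Fin m) (a b : Option (Fin n)) : Prop :=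
  M.cRank j a < M.cRank j b

/-- The set `μ⁻¹(j)` of students matched to college `j` under `μ`. -/
def assigned (M : Market n m) (μ : Fin n → Option (Fin m)) (j : Fin m) : Finset (Fin n) :=
  Finset.univ.filter fun i => μ i = some j

/-- `μ` is a (capacity-feasible) matching: `|μ⁻¹(j)| ≤ q_j` for every college. -/
def IsMatching (M : Market n m) (μ : Fin n → Option (Fin m)) : Prop :=
  ∀ j, (M.assigned μ j).card ≤ M.quota j

/-- Individual rationality of `μ`. -/
def IndRational (M : Market n m) (μ : Fin n → Option (Fin m)) : Prop :=
  (∀ i, ¬ M.sPref i none (μ i)) ∧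
  (∀ j i', μ i' = some j → ¬ M.cPref j none (some i'))

/-- `(i, j)` is a blocking pair for `μ`. -/
def Blocks (M : Market n m) (μ : Fin n → Option (Fin m)) (i : Fin n) (j : Fin m) : Prop :=
  M.sPref i (some j) (μ i) ∧
  (((M.assigned μ j).card < M.quota j ∧ M.cPref j (some i) none) ∨
   ((M.assigned μ j).card = M.quota j ∧ ∃ i' ∈ M.assigned μ j, M.cPref j (some i) (some i')))

/-- `μ` is stable: individually rational with no blocking pair. -/
def Stable (M : Market n m) (μ : Fin n → Option (Fin m)) : Prop :=
  M.IndRational μ ∧ ∀ i j, ¬ M.Blocks μ i j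

/-- `μ` is envy-free: individually rational and any blocking pair involves an
unmatched student. -/
def EnvyFree (M : Market n m) (μ : Fin n → Option (Fin m)) : Prop :=
  M.IndRational μ ∧ ∀ i j, M.Blocks μ i j → μ i = none

/-- `μ` is 1-envy-free: envy-free, and either stable or there is one and only
one student who belongs to every blocking pair. -/
def OneEnvyFree (M : Market n m) (μ : Fin n → Option (Fin m)) : Prop :=
  M.EnvyFree μ ∧ (M.Stable μ ∨ ∃! i : Fin n, ∀ i' j, M.Blocks μ i' j → i' = i)

/-- `(i, j)` is a student-maximal blocking pair: `j` is `i`'s most preferred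
college among those with whom `i` forms a blocking pair. -/
def StudentMaxBlock (M : Market n m) (μ : Fin n → Option (Fin m)) (i : Fin n) (j : Fin m) :
    Prop :=
  M.Blocks μ i j ∧ ∀ j', M.Blocks μ i j' → M.sRank i (some j) ≤ M.sRank i (some j')

/-- `T` is the re-stabilization operator: on a 1-envy-free matching with no
blocking pair it is the identity; otherwise it satisfies the unique
student-maximal blocking pair `(i, j)`, matching `i` to `j`, keeping everyone
not matched to `j` unchanged, keeping the students of `j` if `j` has a vacancy
or if they are not `j`'s worst current student, and unmatching `j`'s worst
current student otherwise. -/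
def IsTStep (M : Market n m) (T : (Fin n → Option (Fin m)) → Fin n → Option (Fin m)) : Prop :=
  ∀ μ, M.IsMatching μ → M.OneEnvyFree μ →
    ((∀ i j, ¬ M.Blocks μ i j) → T μ = μ) ∧
    ∀ i j, M.StudentMaxBlock μ i j →
      T μ i = some j ∧
      ∀ i', i' ≠ i →
        (μ i' ≠ some j → T μ i' = μ i') ∧
        (μ i' = some j →
          ((M.assigned μ j).card < M.quota j → T μ i' = μ i') ∧
          ((M.assigned μ j).card = M.quota j →
            ((∃ i'' ∈ M.assigned μ j, M.cPref j (some i') (some i'')) → T μ i' = μ i') ∧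
            ((∀ i'' ∈ M.assigned μ j, i'' ≠ i' → M.cPref j (some i'') (some i')) →
              T μ i' = none)))

/-- `Tstar` iterates `T` finitely many times from any 1-envy-free matching
until a fixed point of `T` is reached. -/
def IsTStarOf (M : Market n m) (T Tstar : (Fin n → Option (Fin m)) → Fin n → Option (Fin m)) :
    Prop :=
  ∀ μ, M.IsMatching μ → M.OneEnvyFree μ →
    ∃ r : ℕ, Tstar μ = T^[r] μ ∧ T (Tstar μ) = Tstar μ

/-- A one-step responsive improvement for college `j`: `A` is obtained from `B`
either by filling a vacancy with an acceptable student, or by swapping a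
student of `B` for a strictly preferred outside student. -/
def SwapImproves (M : Market n m) (j : Fin m) (A B : Finset (Fin n)) : Prop :=
  (∃ i₁, i₁ ∉ B ∧ A = insert i₁ B ∧ M.cPref j (some i₁) none) ∨
  (∃ i₁ i₂, i₂ ∈ B ∧ i₁ ∉ B ∧ A = insert i₁ (B.erase i₂) ∧ M.cPref j (some i₁) (some i₂))

/-- The responsive extension of college `j`'s strict preference to sets of
students: the transitive closure of one-step responsive improvements. -/
def SetPref (M : Market n m) (j : Fin m) (A B : Finset (Fin n)) : Prop :=
  Relation.TransGen (M.SwapImproves j) A B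

/-- `μ₁ ≿ μ₂`: every college either gets the same set of students or a
strictly (responsively) preferred set. -/
def CollegesWeakPref (M : Market n m) (μ₁ μ₂ : Fin n → Option (Fin m)) : Prop :=
  ∀ j, M.assigned μ₁ j = M.assigned μ₂ j ∨ M.SetPref j (M.assigned μ₁ j) (M.assigned μ₂ j)

/-- `μ` is the student-optimal stable matching: a stable matching that every
student weakly prefers to any other stable matching. -/
def IsSOSM (M : Market n m) (μ : Fin n → Option (Fin m)) : Prop :=
  M.IsMatching μ ∧ M.Stable μ ∧
    ∀ μ', M.IsMatching μ' → M.Stable μ' → ∀ i, M.sRank i (μ i) ≤ M.sRank i (μ' i)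

/-- `μ` (with student `i` unmatched) is a stable matching of the market in
which student `i` has been removed. -/
def StableAway (M : Market n m) (i : Fin n) (μ : Fin n → Option (Fin m)) : Prop :=
  μ i = none ∧
  (∀ i', i' ≠ i → ¬ M.sPref i' none (μ i')) ∧
  (∀ j i', i' ≠ i → μ i' = some j → ¬ M.cPref j none (some i')) ∧
  (∀ i' j, i' ≠ i → ¬ M.Blocks μ i' j)

/-- `μ` (with student `i` unmatched) is the student-optimal stable matching of
the market in which student `i` has been removed. -/
def IsSOSMAway (M : Market n m) (i : Fin n) (μ : Fin n → Option (Fin m)) : Prop :=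
  M.IsMatching μ ∧ M.StableAway i μ ∧
    ∀ μ', M.IsMatching μ' → M.StableAway i μ' →
      ∀ i', i' ≠ i → M.sRank i' (μ i') ≤ M.sRank i' (μ' i')

/-- The maximum rank difference `h(w)` among the colleges' preferences: the
largest rank gap `|w_j(i₁) − w_j(i₂)|` over colleges `j` and pairs `(i₁, i₂)`
on whose relative ranking at least two colleges disagree (`0` if there is no
disagreement). -/
def maxRankDiff (M : Market n m) : ℕ :=
  Finset.univ.sup fun j : Fin m =>
    (Finset.univ.filter fun q : Option (Fin n) × Option (Fin n) =>
        ∃ j₁ j₂ : Fin m, M.cPref j₁ q.1 q.2 ∧ M.cPref j₂ q.2 q.1).sup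
      fun q => ((M.cRank j q.1 : ℤ) - (M.cRank j q.2 : ℤ)).natAbs

/-- `N*_{j,1}(μ) = μ⁻¹(j) \ μ*⁻¹(j)` : students of `j` under `μ` but not `μs`. -/
def Nset1 (M : Market n m) (μ μs : Fin n → Option (Fin m)) (j : Fin m) : Finset (Fin n) :=
  M.assigned μ j \ M.assigned μs j

/-- `N*_{j,0}(μ) = μ*⁻¹(j) \ μ⁻¹(j)` : students of `j` under `μs` but not `μ`. -/
def Nset0 (M : Market n m) (μ μs : Fin n → Option (Fin m)) (j : Fin m) : Finset (Fin n) :=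
  M.assigned μs j \ M.assigned μ j

/-- The rank `r_{j,i}(A)` of student `i` within the set `A` according to `≻_j`. -/
def rankIn (M : Market n m) (j : Fin m) (i : Fin n) (A : Finset (Fin n)) : ℕ :=
  (A.filter fun i' => M.cPref j (some i') (some i)).card + 1

/-- `a ▷_j b`: student `a` displaces student `b` from college `j` (as we move
from the SOSM `μs` to the stable matching `μ`). -/
def Displaces (M : Market n m) (μ μs : Fin n → Option (Fin m)) (j : Fin m) (a b : Fin n) :
    Prop :=
  a ∈ M.Nset1 μ μs j ∧ b ∈ M.Nset0 μ μs j ∧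
    M.rankIn j a (M.Nset1 μ μs j) = M.rankIn j b (M.Nset0 μ μs j)

/-- `a ▷ b`: `a` displaces `b` from some college. -/
def DisplacesAny (M : Market n m) (μ μs : Fin n → Option (Fin m)) (a b : Fin n) : Prop :=
  ∃ j, M.Displaces μ μs j a b

/-- The positions of the related one-to-one market: college `j` is split into
`q_j` ordered positions. -/
abbrev Position (M : Market n m) : Type := (j : Fin m) × Fin (M.quota j)

/-- Student `i`'s strict preference over positions in the related one-to-one
market: positions of strictly better colleges are better, and within a college
a smaller index is better. -/
def PosBetter (M : Market n m) (i : Fin n) :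
    Option (Position M) → Option (Position M) → Prop
  | some q, some q' =>
      M.sRank i (some q.1) < M.sRank i (some q'.1) ∨ (q.1 = q'.1 ∧ (q.2 : ℕ) < (q'.2 : ℕ))
  | some q, none => M.sRank i (some q.1) < M.sRank i none
  | none, some q' => M.sRank i none < M.sRank i (some q'.1)
  | none, none => False

/-- `(μN, μM)` is the one-to-one matching of the related market corresponding
to the many-to-one matching `μ`: the students of `μ⁻¹(j)` occupy, in the order
of college `j`'s preference, the ordered positions of `j`. -/
def Corresponds (M : Market n m) (μ : Fin n → Option (Fin m))
    (μN : Fin n → Option (Position M)) (μM : Position M → Option (Fin n)) : Prop :=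
  (∀ i p, μN i = some p ↔ μM p = some i) ∧
  (∀ i j, (∃ s, μN i = some ⟨j, s⟩) ↔ μ i = some j) ∧
  (∀ i j (s : Fin (M.quota j)), μN i = some ⟨j, s⟩ →
    (s : ℕ) = ((M.assigned μ j).filter fun i' => M.cPref j (some i') (some i)).card)

/-- `(i, p)` is a blocking pair in the related one-to-one market. -/
def PosBlocks (M : Market n m) (μN : Fin n → Option (Position M))
    (μM : Position M → Option (Fin n)) (i : Fin n) (p : Position M) : Prop :=
  M.PosBetter i (some p) (μN i) ∧ M.cPref p.1 (some i) (μM p)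

/-- Individual rationality in the related one-to-one market. -/
def PosIR (M : Market n m) (μN : Fin n → Option (Position M))
    (μM : Position M → Option (Fin n)) : Prop :=
  (∀ i, ¬ M.PosBetter i none (μN i)) ∧ (∀ p : Position M, ¬ M.cPref p.1 none (μM p))

/-- Stability in the related one-to-one market. -/
def PosStable (M : Market n m) (μN : Fin n → Option (Position M))
    (μM : Position M → Option (Fin n)) : Prop :=
  M.PosIR μN μM ∧ ∀ i p, ¬ M.PosBlocks μN μM i p

/-- Simplicity in the related one-to-one market: individually rational and any
blocking pair involves an unmatched student. -/
def PosSimple (M : Market n m) (μN : Fin n → Option (Position M))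
    (μM : Position M → Option (Fin n)) : Prop :=
  M.PosIR μN μM ∧ ∀ i p, M.PosBlocks μN μM i p → μN i = none

/-- 1-simplicity in the related one-to-one market: simple, and either stable or
there is one and only one student belonging to every blocking pair. -/
def PosOneSimple (M : Market n m) (μN : Fin n → Option (Position M))
    (μM : Position M → Option (Fin n)) : Prop :=
  M.PosSimple μN μM ∧
    (M.PosStable μN μM ∨ ∃! i : Fin n, ∀ i' p, M.PosBlocks μN μM i' p → i' = i)

end Market

/-- A generic one-to-one matching market with `n` students and `p` positions,
with strict preferences encoded by injective rank functions. -/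
structure OOMarket (n p : ℕ) where
  sRank : Fin n → Option (Fin p) → ℕ
  sRank_inj : ∀ i, Function.Injective (sRank i)
  pRank : Fin p → Option (Fin n) → ℕ
  pRank_inj : ∀ c, Function.Injective (pRank c)

namespace OOMarket

variable {n p : ℕ}

/-- `(μN, μM)` is a one-to-one matching. -/
def IsOOMatching (O : OOMarket n p) (μN : Fin n → Option (Fin p))
    (μM : Fin p → Option (Fin n)) : Prop :=
  ∀ i c, μN i = some c ↔ μM c = some i

/-- `(i, c)` is a blocking pair for `(μN, μM)`. -/
def OOBlocks (O : OOMarket n p) (μN : Fin n → Option (Fin p))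
    (μM : Fin p → Option (Fin n)) (i : Fin n) (c : Fin p) : Prop :=
  O.sRank i (some c) < O.sRank i (μN i) ∧ O.pRank c (some i) < O.pRank c (μM c)

/-- Individual rationality. -/
def OOIR (O : OOMarket n p) (μN : Fin n → Option (Fin p))
    (μM : Fin p → Option (Fin n)) : Prop :=
  (∀ i, ¬ O.sRank i none < O.sRank i (μN i)) ∧ (∀ c, ¬ O.pRank c none < O.pRank c (μM c))

/-- Stability. -/
def OOStable (O : OOMarket n p) (μN : Fin n → Option (Fin p))
    (μM : Fin p → Option (Fin n)) : Prop :=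
  O.OOIR μN μM ∧ ∀ i c, ¬ O.OOBlocks μN μM i c

/-- Simplicity: individually rational and every blocking pair involves an
unmatched student. -/
def OOSimple (O : OOMarket n p) (μN : Fin n → Option (Fin p))
    (μM : Fin p → Option (Fin n)) : Prop :=
  O.OOIR μN μM ∧ ∀ i c, O.OOBlocks μN μM i c → μN i = none

/-- 1-simplicity: simple, and either stable or there is one and only one
student belonging to every blocking pair. -/
def OOOneSimple (O : OOMarket n p) (μN : Fin n → Option (Fin p))
    (μM : Fin p → Option (Fin n)) : Prop :=
  O.OOSimple μN μM ∧
    (O.OOStable μN μM ∨ ∃! i : Fin n, ∀ i' c, O.OOBlocks μN μM i' c → i' = i)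

end OOMarket

end

/-!
By the rural hospitals theorem `μ` and `μ*` fill every college equally and leave the same
students unmatched, so there is a permutation `σ` of the students with `μ*(σ i) = μ(i)` that maps
the reassigned students (those with `μ i ≠ μ* i`) onto themselves; stability of `μ` makes the
college `μ(i)` prefer `i` to `σ i` for every reassigned `i`. Fix `j` and let `β` be `j`'s rank of
its best student in `μ*⁻¹(j) \ μ⁻¹(j)`. Among the reassigned students, `σ` moves as many from
`j`-rank `< β` to `j`-rank `≥ β` as the other way. The first kind includes all of
`μ⁻¹(j) \ μ*⁻¹(j)`. For the second kind, `μ(i)` and `j` disagree on `i` and `σ i`, so the `j`-rank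
of `σ i` lies in `[β - h(w), β)`: there are at most `h(w)` of them.
-/

open Finset

theorem Equiv.Perm.card_filter_and_not_apply_eq {α : Type*} [Fintype α] (σ : Equiv.Perm α)
    (p : α → Prop) [DecidablePred p] :
    #{x | p x ∧ ¬ p (σ x)} = #{x | ¬ p x ∧ p (σ x)} := by
  have hσ : #{x | p (σ x)} = #{x | p x} := card_equiv σ (by simp)
  have h₁ : #{x | p x ∧ p (σ x)} + #{x | p x ∧ ¬ p (σ x)} = #{x | p x} := by
    rw [← card_union_of_disjoint (disjoint_filter.2 fun _ _ h h' => h'.2 h.2)]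
    congr 1
    ext
    simp only [mem_union, mem_filter, mem_univ, true_and]
    tauto
  have h₂ : #{x | p x ∧ p (σ x)} + #{x | ¬ p x ∧ p (σ x)} = #{x | p (σ x)} := by
    rw [← card_union_of_disjoint (disjoint_filter.2 fun _ _ h h' => h'.1 h.1)]
    congr 1
    ext
    simp only [mem_union, mem_filter, mem_univ, true_and]
    tauto
  omega

theorem exists_perm_apply_eq_of_card_fiber_eq {α β : Type*} [Fintype α] [DecidableEq β]
    {f g : α → β} (h : ∀ b, #{x | f x = b} = #{x | g x = b}) :
    ∃ σ : Equiv.Perm α, ∀ x, g (σ x) = f x ∧ (f (σ x) = g (σ x) ↔ f x = g x) := by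
  -- Tagging each point with whether `f` and `g` agree there makes `σ` preserve that set.
  let f' : α → β × Bool := fun x => (f x, decide (f x = g x))
  let g' : α → β × Bool := fun x => (g x, decide (f x = g x))
  have hfiber : ∀ c, #{x | f' x = c} = #{x | g' x = c} := by
    rintro ⟨b, _ | _⟩
    · have hf : univ.filter (fun x => f' x = (b, false)) =
          ({x | f x = b} : Finset α) \ ({x | g x = b} : Finset α) := by
        ext x
        simp only [f', Prod.mk.injEq, decide_eq_false_iff_not, mem_filter, mem_univ, true_and,
          mem_sdiff]
        grind
      have hg : univ.filter (fun x => g' x = (b, false)) =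
          ({x | g x = b} : Finset α) \ ({x | f x = b} : Finset α) := by
        ext x
        simp only [g', Prod.mk.injEq, decide_eq_false_iff_not, mem_filter, mem_univ, true_and,
          mem_sdiff]
        grind
      rw [hf, hg, card_sdiff_comm (h b)]
    · congr 1
      ext x
      simp only [f', g', mem_filter, mem_univ, true_and, Prod.mk.injEq, decide_eq_true_eq]
      grind
  let e : ∀ c, {x // f' x = c} ≃ {x // g' x = c} := fun c =>
    Fintype.equivOfCardEq (by rw [Fintype.card_subtype, Fintype.card_subtype, hfiber])
  refine ⟨Equiv.ofFiberEquiv e, fun x => ?_⟩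
  have := Equiv.ofFiberEquiv_map e x
  simp only [f', g', Prod.mk.injEq, decide_eq_decide] at this
  exact this

namespace Market

variable {n m : ℕ} {M : Market n m} {μ μs : Fin n → Option (Fin m)}

@[simp]
lemma mem_assigned {j : Fin m} {i : Fin n} : i ∈ M.assigned μ j ↔ μ i = some j := by
  simp [assigned]

lemma cPref_or_cPref (j : Fin m) {a b : Option (Fin n)} (h : a ≠ b) :
    M.cPref j a b ∨ M.cPref j b a :=
  Nat.lt_or_gt_of_ne fun he => h (M.cRank_inj j he)

lemma cRank_le_add_maxRankDiff (j : Fin m) {c₁ c₂ : Fin m} {a b : Option (Fin n)}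
    (h₁ : M.cPref c₁ a b) (h₂ : M.cPref c₂ b a) :
    M.cRank j a ≤ M.cRank j b + M.maxRankDiff := by
  have hq : (a, b) ∈ (univ.filter fun q : Option (Fin n) × Option (Fin n) =>
      ∃ j₁ j₂ : Fin m, M.cPref j₁ q.1 q.2 ∧ M.cPref j₂ q.2 q.1) := by
    exact mem_filter.mpr ⟨mem_univ _, c₁, c₂, h₁, h₂⟩
  have : ((M.cRank j a : ℤ) - M.cRank j b).natAbs ≤ M.maxRankDiff := by
    unfold maxRankDiff
    exact le_sup_of_le (mem_univ j) (le_sup_of_le hq le_rfl)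
  omega

lemma IsSOSM.sPref_of_ne (hs : M.IsSOSM μs) (hμ : M.IsMatching μ) (hst : M.Stable μ)
    {i : Fin n} (h : μs i ≠ μ i) : M.sPref i (μs i) (μ i) :=
  lt_of_le_of_ne (hs.2.2 μ hμ hst i) fun he => h (M.sRank_inj i he)

lemma sPref_of_mem_nset0 (hμ : M.IsMatching μ) (hst : M.Stable μ) (hs : M.IsSOSM μs)
    {c : Fin m} {b : Fin n} (hb : b ∈ M.Nset0 μ μs c) : M.sPref b (some c) (μ b) := by
  simp only [Nset0, mem_sdiff, mem_assigned] at hb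
  exact hb.1 ▸ hs.sPref_of_ne hμ hst (hb.1 ▸ Ne.symm hb.2 :)

lemma card_assigned_eq_quota_of_mem_nset0 (hμ : M.IsMatching μ) (hst : M.Stable μ)
    (hs : M.IsSOSM μs) {c : Fin m} {b : Fin n} (hb : b ∈ M.Nset0 μ μs c) :
    #(M.assigned μ c) = M.quota c := by
  refine (hμ c).eq_or_lt.resolve_right fun hlt => hst.2 b c ⟨sPref_of_mem_nset0 hμ hst hs hb,
    Or.inl ⟨hlt, ?_⟩⟩
  have hbs : μs b = some c := mem_assigned.mp (mem_sdiff.mp hb).1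
  exact (M.cPref_or_cPref c (Option.some_ne_none b)).resolve_right (hs.2.1.1.2 c b hbs)

lemma cPref_of_mem_assigned_of_mem_nset0 (hμ : M.IsMatching μ) (hst : M.Stable μ)
    (hs : M.IsSOSM μs) {c : Fin m} {a b : Fin n} (ha : a ∈ M.assigned μ c)
    (hb : b ∈ M.Nset0 μ μs c) : M.cPref c (some a) (some b) := by
  have hab : some a ≠ some b := by
    rintro ⟨⟩
    exact (mem_sdiff.mp hb).2 ha
  refine (M.cPref_or_cPref c hab).resolve_right fun hba => hst.2 b c
    ⟨sPref_of_mem_nset0 hμ hst hs hb,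
      Or.inr ⟨card_assigned_eq_quota_of_mem_nset0 hμ hst hs hb, a, ha, hba⟩⟩

lemma card_assigned_le_of_isSOSM (hμ : M.IsMatching μ) (hst : M.Stable μ) (hs : M.IsSOSM μs)
    (c : Fin m) : #(M.assigned μs c) ≤ #(M.assigned μ c) := by
  rcases (M.Nset0 μ μs c).eq_empty_or_nonempty with h | ⟨b, hb⟩
  · exact card_le_card (sdiff_eq_empty_iff_subset.mp h)
  · exact (card_assigned_eq_quota_of_mem_nset0 hμ hst hs hb).symm ▸ hs.1 c

lemma ne_none_of_isSOSM (hμ : M.IsMatching μ) (hst : M.Stable μ) (hs : M.IsSOSM μs)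
    {i : Fin n} (h : μ i ≠ none) : μs i ≠ none := by
  intro hi
  exact hst.1.1 i (hi ▸ hs.sPref_of_ne hμ hst (hi ▸ h.symm))

lemma card_filter_eq_none_add_sum_card_assigned (M : Market n m) (μ : Fin n → Option (Fin m)) :
    #{i | μ i = none} + ∑ c, #(M.assigned μ c) = n := by
  have := card_eq_sum_card_fiberwise (s := univ) (t := univ) (f := μ) fun _ _ => mem_univ _
  rw [Fintype.sum_option, card_univ, Fintype.card_fin] at this
  exact this.symm

theorem rural_hospitals (hμ : M.IsMatching μ) (hst : M.Stable μ) (hs : M.IsSOSM μs) :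
    (∀ c, #(M.assigned μ c) = #(M.assigned μs c)) ∧ ∀ i, μ i = none ↔ μs i = none := by
  have hsub : univ.filter (fun i => μs i = none) ⊆ univ.filter fun i => μ i = none := fun i => by
    simpa only [mem_filter, mem_univ, true_and] using not_imp_not.mp (ne_none_of_isSOSM hμ hst hs)
  have hle := card_assigned_le_of_isSOSM hμ hst hs
  have hsum : ∑ c, #(M.assigned μs c) ≤ ∑ c, #(M.assigned μ c) := sum_le_sum fun c _ => hle c
  have hμn := M.card_filter_eq_none_add_sum_card_assigned μ
  have hμsn := M.card_filter_eq_none_add_sum_card_assigned μs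
  have hU := card_le_card hsub
  refine ⟨fun c => ((sum_eq_sum_iff_of_le fun c _ => hle c).mp (by omega) c (mem_univ c)).symm,
    fun i => ?_⟩
  have := congrArg (i ∈ ·) (eq_of_subset_of_card_le hsub (by omega))
  simpa [eq_comm] using this.symm

lemma card_nset1_eq_card_nset0 (hμ : M.IsMatching μ) (hst : M.Stable μ) (hs : M.IsSOSM μs)
    (c : Fin m) : #(M.Nset1 μ μs c) = #(M.Nset0 μ μs c) :=
  card_sdiff_comm ((rural_hospitals hμ hst hs).1 c)

lemma exists_perm_of_isSOSM (hμ : M.IsMatching μ) (hst : M.Stable μ) (hs : M.IsSOSM μs) :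
    ∃ σ : Equiv.Perm (Fin n), ∀ i, μs (σ i) = μ i ∧ (μ (σ i) = μs (σ i) ↔ μ i = μs i) := by
  obtain ⟨hcard, hnone⟩ := rural_hospitals hμ hst hs
  refine exists_perm_apply_eq_of_card_fiber_eq fun o => ?_
  cases o with
  | none => exact congrArg card (filter_congr fun i _ => hnone i)
  | some c => exact hcard c

lemma exists_mem_nset1 (hnone : ∀ i, μ i = none ↔ μs i = none) {i : Fin n} (hi : μ i ≠ μs i) :
    ∃ c, i ∈ M.Nset1 μ μs c := by
  obtain ⟨c, hc⟩ := Option.ne_none_iff_exists'.mp fun h => hi (h.trans ((hnone i).mp h).symm)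
  exact ⟨c, by simpa [Nset1, hc] using hc ▸ hi.symm⟩

lemma perm_mem_nset0_of_mem_nset1 {σ : Equiv.Perm (Fin n)}
    (hσ : ∀ i, μs (σ i) = μ i ∧ (μ (σ i) = μs (σ i) ↔ μ i = μs i))
    {c : Fin m} {i : Fin n} (hi : i ∈ M.Nset1 μ μs c) : σ i ∈ M.Nset0 μ μs c := by
  simp only [Nset1, Nset0, mem_sdiff, mem_assigned, (hσ i).1] at hi ⊢
  exact ⟨hi.1, fun h => hi.2 ((hσ i).2.mp (h.trans ((hσ i).1.trans hi.1).symm) ▸ hi.1)⟩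

theorem card_nset1_le_maxRankDiff (hμ : M.IsMatching μ) (hst : M.Stable μ) (hs : M.IsSOSM μs)
    (j : Fin m) : #(M.Nset1 μ μs j) ≤ M.maxRankDiff := by
  rcases (M.Nset0 μ μs j).eq_empty_or_nonempty with h0 | h0
  · simp [card_nset1_eq_card_nset0 hμ hst hs j, h0]
  obtain ⟨y, hy, hymin⟩ := exists_min_image _ (fun b => M.cRank j (some b)) h0
  obtain ⟨σ, hσ⟩ := exists_perm_of_isSOSM hμ hst hs
  have hnone := (rural_hospitals hμ hst hs).2
  set β := M.cRank j (some y)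
  set P : Fin n → Prop := fun i => μ i ≠ μs i ∧ M.cRank j (some i) < β
  have hleave : M.Nset1 μ μs j ⊆ ({i | P i ∧ ¬ P (σ i)} : Finset (Fin n)) := by
    intro i hi
    have hσi := perm_mem_nset0_of_mem_nset1 hσ hi
    obtain ⟨hiμ, hiμs⟩ := mem_sdiff.mp hi
    simp only [mem_filter, mem_univ, true_and, P, not_and, not_lt]
    refine ⟨⟨fun h => hiμs (mem_assigned.mpr (h ▸ mem_assigned.mp hiμ)), ?_⟩,
      fun _ => hymin _ hσi⟩
    exact cPref_of_mem_assigned_of_mem_nset0 hμ hst hs hiμ hy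
  have henter : ∀ i ∈ ({i | ¬ P i ∧ P (σ i)} : Finset (Fin n)),
      M.cRank j (some (σ i)) ∈ Ico (β - M.maxRankDiff) β := by
    intro i hi
    simp only [mem_filter, mem_univ, true_and, P, not_and, not_lt] at hi
    obtain ⟨hiβ, hσch, hσβ⟩ := hi
    have hch : μ i ≠ μs i := fun h => hσch ((hσ i).2.mpr h)
    obtain ⟨c, hic⟩ := exists_mem_nset1 hnone hch
    have hci : M.cPref c (some i) (some (σ i)) := cPref_of_mem_assigned_of_mem_nset0 hμ hst hs
      (mem_sdiff.mp hic).1 (perm_mem_nset0_of_mem_nset1 hσ hic)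
    have hβi : β ≤ M.cRank j (some i) := hiβ hch
    have := M.cRank_le_add_maxRankDiff j hci (hσβ.trans_le hβi)
    exact mem_Ico.mpr ⟨by omega, hσβ⟩
  calc #(M.Nset1 μ μs j) ≤ #{i | P i ∧ ¬ P (σ i)} := card_le_card hleave
    _ = #{i | ¬ P i ∧ P (σ i)} := σ.card_filter_and_not_apply_eq P
    _ ≤ #(Ico (β - M.maxRankDiff) β) := card_le_card_of_injOn _ henter fun i _ i' _ h =>
        σ.injective (Option.some_injective _ (M.cRank_inj j h))
    _ ≤ M.maxRankDiff := by rw [Nat.card_Ico]; omega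

lemma filter_not_iff_eq_some_eq_nset1_union_nset0 (c : Fin m) :
    ({i | ¬ (μ i = some c ↔ μs i = some c)} : Finset (Fin n)) =
      M.Nset1 μ μs c ∪ M.Nset0 μ μs c := by
  ext i
  simp only [Nset1, Nset0, mem_filter, mem_univ, true_and, mem_union, mem_sdiff, mem_assigned]
  tauto

end Market

/-- distance bound between the SOSM `μ*` and an arbitrary stable
matching `μ` when the maximum rank difference is `k`: per-college bounds
`|μ⁻¹(j) \ μ*⁻¹(j)| ≤ 4(k ∨ 1)` and `|μ*⁻¹(j) \ μ⁻¹(j)| ≤ 4(k ∨ 1)`, and for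
every `j ∈ M ∪ {0}` the number of students whose membership indicator for `j`
differs is at most `8(k ∨ 1)`. -/
theorem distance_bound_stable_to_sosm {n m : ℕ} (M : Market n m) (k : ℕ)
    (hk : M.maxRankDiff = k)
    (μ μs : Fin n → Option (Fin m))
    (hμ : M.IsMatching μ) (hst : M.Stable μ) (hs : M.IsSOSM μs) :
    (∀ j : Fin m,
      (M.Nset1 μ μs j).card ≤ 4 * max k 1 ∧
      (M.Nset0 μ μs j).card ≤ 4 * max k 1) ∧
    (∀ j : Option (Fin m),
      (Finset.univ.filter fun i : Fin n => ¬ ((μ i = j) ↔ (μs i = j))).card ≤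
        8 * max k 1) := by
  subst hk
  have h1 := Market.card_nset1_le_maxRankDiff hμ hst hs
  have h0 := fun j => Market.card_nset1_eq_card_nset0 hμ hst hs j ▸ h1 j
  have hK := le_max_left M.maxRankDiff 1
  refine ⟨fun j => ⟨by linarith [h1 j], by linarith [h0 j]⟩, ?_⟩
  rintro (_ | c)
  · simp [(Market.rural_hospitals hμ hst hs).2]
  · rw [Market.filter_not_iff_eq_some_eq_nset1_union_nset0]
    linarith [card_union_le (M.Nset1 μ μs c) (M.Nset0 μ μs c), h1 c, h0 c]
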